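/- Define on [2√2, 4] the functions a(z) = √((−z⁴ + 16z²)/(8(z² + 2))), g(z) = 4·arccos(z/4) − (z/2)·√(4 − z²/4), h(z) = z²·arcsin(a(z)/z) − 4·arcsin(a(z)/2) + 2·arccos(a(z)), and f(z) = 2(g(z) + h(z)). Then f is strictly increasing on (2√2, 4) and f(4) = 2π. -/

import Mathlib

/-!
Put `q = √(16 - z²)` and `r = √(8 (z² + 2))`. For `z > 0` one has `a(z) = z q / r`, and
`1 - (a/z)²`, `1 - (a/2)²`, `1 - a²` are the squares of `3z/r`, `(z² + 8)/(2r)`, `(z² - 4)/r`,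
so on `(2, 4)` every square root produced by differentiating `arcsin` and `arccos` is rational
in `z, q, r`. The contributions of `a'` to `h'` then cancel, because
`(z² + 8)(z² - 4) - 18 z² = -(16 - z²)(z² + 2)`, leaving `h' = 2z arcsin(q/r)`, while `g' = -q/2`.
Hence `f' = 4z arcsin(q/r) - q > 4z q/r - q > 0`, as `arcsin x > x` on `(0, 1]` and `r < 4z`.
-/

noncomputable def aFun (z : ℝ) : ℝ :=
  Real.sqrt ((-z ^ 4 + 16 * z ^ 2) / (8 * (z ^ 2 + 2)))

noncomputable def gFun (z : ℝ) : ℝ :=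
  4 * Real.arccos (z / 4) - (z / 2) * Real.sqrt (4 - z ^ 2 / 4)

noncomputable def hFun (z : ℝ) : ℝ :=
  z ^ 2 * Real.arcsin (aFun z / z) - 4 * Real.arcsin (aFun z / 2) +
    2 * Real.arccos (aFun z)

noncomputable def fFun (z : ℝ) : ℝ := 2 * (gFun z + hFun z)

open Real Set Topology

noncomputable def aRatio (z : ℝ) : ℝ := √(16 - z ^ 2) / √(8 * (z ^ 2 + 2))

lemma aFun_eq_mul_aRatio {z : ℝ} (hz : 0 ≤ z) : aFun z = z * aRatio z := by
  rw [aFun, aRatio, show -z ^ 4 + 16 * z ^ 2 = z ^ 2 * (16 - z ^ 2) by ring, mul_div_assoc,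
    sqrt_mul (sq_nonneg z), sqrt_sq hz, sqrt_div' _ (by positivity)]

lemma aFun_div_self {z : ℝ} (hz : 0 < z) : aFun z / z = aRatio z := by
  rw [aFun_eq_mul_aRatio hz.le, mul_div_cancel_left₀ _ hz.ne']

lemma aFun_sq {z : ℝ} (hz : z ^ 2 ≤ 16) :
    aFun z ^ 2 = z ^ 2 * (16 - z ^ 2) / (8 * (z ^ 2 + 2)) := by
  rw [aFun, sq_sqrt (by apply div_nonneg <;> nlinarith)]
  ring

lemma aRatio_sq {z : ℝ} (hz : z ^ 2 ≤ 16) :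
    aRatio z ^ 2 = (16 - z ^ 2) / (8 * (z ^ 2 + 2)) := by
  rw [aRatio, div_pow, sq_sqrt (by linarith), sq_sqrt (by positivity)]

lemma aRatio_pos {z : ℝ} (hz : z ^ 2 < 16) : 0 < aRatio z :=
  div_pos (sqrt_pos.2 (by linarith)) (sqrt_pos.2 (by positivity))

lemma aRatio_lt_one {z : ℝ} (hz : z ≠ 0) : aRatio z < 1 := by
  have hr : 0 < √(8 * (z ^ 2 + 2)) := sqrt_pos.2 (by positivity)
  have hz2 : 0 < z ^ 2 := by positivity
  rw [aRatio, div_lt_one hr, sqrt_lt' hr, sq_sqrt (by positivity)]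
  linarith

lemma aFun_lt_one {z : ℝ} (hz : z ^ 2 ≠ 4) : aFun z < 1 := by
  rw [aFun, sqrt_lt' one_pos, one_pow, div_lt_one (by positivity)]
  have hz' : z ^ 2 - 4 ≠ 0 := sub_ne_zero.2 hz
  have : 0 < (z ^ 2 - 4) ^ 2 := by positivity
  nlinarith

lemma sqrt_one_sub_aRatio_sq {z : ℝ} (hz : 0 ≤ z) (hz4 : z ^ 2 ≤ 16) :
    √(1 - aRatio z ^ 2) = 3 * z / √(8 * (z ^ 2 + 2)) := by
  rw [aRatio_sq hz4, ← sqrt_sq (by positivity : 0 ≤ 3 * z), ← sqrt_div' _ (by positivity)]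
  congr 1
  field_simp
  ring

lemma sqrt_one_sub_half_aFun_sq {z : ℝ} (hz : z ^ 2 ≤ 16) :
    √(1 - (aFun z / 2) ^ 2) = (z ^ 2 + 8) / (2 * √(8 * (z ^ 2 + 2))) := by
  rw [div_pow, aFun_sq hz, ← sqrt_sq (by positivity : 0 ≤ z ^ 2 + 8), ← sqrt_sq zero_le_two,
    ← sqrt_mul' _ (by positivity), ← sqrt_div' _ (by positivity)]
  congr 1
  field_simp
  ring

lemma sqrt_one_sub_aFun_sq {z : ℝ} (hz : 4 ≤ z ^ 2) (hz4 : z ^ 2 ≤ 16) :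
    √(1 - aFun z ^ 2) = (z ^ 2 - 4) / √(8 * (z ^ 2 + 2)) := by
  rw [aFun_sq hz4, ← sqrt_sq (by linarith : 0 ≤ z ^ 2 - 4), ← sqrt_div' _ (by positivity)]
  congr 1
  field_simp
  ring

lemma hasDerivAt_sqrt_sixteen_sub_sq {z : ℝ} (hz : z ^ 2 < 16) :
    HasDerivAt (fun x ↦ √(16 - x ^ 2)) (-z / √(16 - z ^ 2)) z := by
  convert ((hasDerivAt_pow 2 z).const_sub 16).sqrt (by linarith) using 1
  field_simp
  ring

lemma hasDerivAt_sqrt_eight_mul_sq_add_two (z : ℝ) :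
    HasDerivAt (fun x ↦ √(8 * (x ^ 2 + 2))) (8 * z / √(8 * (z ^ 2 + 2))) z := by
  convert (((hasDerivAt_pow 2 z).add_const 2).const_mul 8).sqrt (by positivity) using 1
  field_simp
  ring

lemma hasDerivAt_aRatio {z : ℝ} (hz : z ^ 2 < 16) :
    HasDerivAt aRatio (-144 * z / (√(16 - z ^ 2) * √(8 * (z ^ 2 + 2)) ^ 3)) z := by
  have hq : 0 < √(16 - z ^ 2) := sqrt_pos.2 (by linarith)
  have hr : 0 < √(8 * (z ^ 2 + 2)) := sqrt_pos.2 (by positivity)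
  refine ((hasDerivAt_sqrt_sixteen_sub_sq hz).div (hasDerivAt_sqrt_eight_mul_sq_add_two z)
    hr.ne').congr_deriv ?_
  field_simp
  rw [sq_sqrt (by positivity : (0 : ℝ) ≤ 8 * (z ^ 2 + 2)), sq_sqrt (by linarith : 0 ≤ 16 - z ^ 2)]
  ring

lemma hasDerivAt_gFun {z : ℝ} (hz : -4 < z) (hz4 : z < 4) :
    HasDerivAt gFun (-√(16 - z ^ 2) / 2) z := by
  have hz16 : 0 < 16 - z ^ 2 := by nlinarith
  have hq : 0 < √(16 - z ^ 2) := sqrt_pos.2 hz16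
  have hsqrt_quarter : √(1 - (z / 4) ^ 2) = √(16 - z ^ 2) / 4 := by
    rw [← sqrt_sq (by norm_num : (0 : ℝ) ≤ 4), ← sqrt_div' _ (by norm_num)]
    congr 1
    ring
  have hsqrt_half : √(4 - z ^ 2 / 4) = √(16 - z ^ 2) / 2 := by
    rw [← sqrt_sq (by norm_num : (0 : ℝ) ≤ 2), ← sqrt_div' _ (by norm_num)]
    congr 1
    ring
  have harccos := (hasDerivAt_arccos (x := z / 4) (by linarith) (by linarith)).comp z
    ((hasDerivAt_id' z).div_const 4)
  have hsqrt := (((hasDerivAt_pow 2 z).div_const 4).const_sub 4).sqrt (by linarith)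
  refine ((harccos.const_mul 4).sub (((hasDerivAt_id' z).div_const 2).mul hsqrt)).congr_deriv ?_
  simp only [hsqrt_quarter, hsqrt_half]
  field_simp
  rw [sq_sqrt hz16.le]
  ring

lemma hFun_eventuallyEq {z : ℝ} (hz : 0 < z) :
    hFun =ᶠ[𝓝 z] fun x ↦ x ^ 2 * arcsin (aRatio x) - 4 * arcsin (x * aRatio x / 2) +
      2 * arccos (x * aRatio x) := by
  filter_upwards [lt_mem_nhds hz] with x hx
  rw [hFun, aFun_div_self hx, aFun_eq_mul_aRatio hx.le]

lemma hasDerivAt_hFun {z : ℝ} (hz : 2 < z) (hz4 : z < 4) :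
    HasDerivAt hFun (2 * z * arcsin (aFun z / z)) z := by
  have hz0 : 0 < z := by linarith
  have hz16 : z ^ 2 < 16 := by nlinarith
  have hz2 : 4 < z ^ 2 := by nlinarith
  have hs_pos := aRatio_pos hz16
  have hs_lt := aRatio_lt_one hz0.ne'
  have ha_pos : 0 < z * aRatio z := mul_pos hz0 hs_pos
  have ha_lt : z * aRatio z < 1 := aFun_eq_mul_aRatio hz0.le ▸ aFun_lt_one hz2.ne'
  have hs := hasDerivAt_aRatio hz16
  have ha := (hasDerivAt_id' z).mul hs
  have h1 := (hasDerivAt_arcsin (by linarith) hs_lt.ne).comp z hs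
  have h2 := (hasDerivAt_arcsin (x := z * aRatio z / 2) (by linarith) (by linarith)).comp z
    (ha.div_const 2)
  have h3 := (hasDerivAt_arccos (by linarith) ha_lt.ne).comp z ha
  refine ((((hasDerivAt_pow 2 z).mul h1).sub (h2.const_mul 4)).add (h3.const_mul 2))
    |>.congr_of_eventuallyEq (hFun_eventuallyEq hz0) |>.congr_deriv ?_
  have hq : 0 < √(16 - z ^ 2) := sqrt_pos.2 (by linarith)
  have hr : 0 < √(8 * (z ^ 2 + 2)) := sqrt_pos.2 (by positivity)
  have hz2' : z ^ 2 - 4 ≠ 0 := by linarith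
  rw [← aFun_eq_mul_aRatio hz0.le, sqrt_one_sub_aRatio_sq hz0.le hz16.le,
    sqrt_one_sub_half_aFun_sq hz16.le, sqrt_one_sub_aFun_sq hz2.le hz16.le, aFun_div_self hz0]
  simp only [Function.comp_apply, aRatio]
  field_simp
  rw [sq_sqrt (by positivity : (0 : ℝ) ≤ 8 * (z ^ 2 + 2)), sq_sqrt (by linarith : 0 ≤ 16 - z ^ 2)]
  push_cast
  ring

lemma hasDerivAt_fFun {z : ℝ} (hz : 2 < z) (hz4 : z < 4) :
    HasDerivAt fFun (4 * z * arcsin (aFun z / z) - √(16 - z ^ 2)) z :=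
  (((hasDerivAt_gFun (by linarith) hz4).add (hasDerivAt_hFun hz hz4)).const_mul 2).congr_deriv
    (by ring)

lemma lt_arcsin_self {x : ℝ} (hx : 0 < x) (hx1 : x ≤ 1) : x < arcsin x := by
  simpa only [sin_arcsin (by linarith) hx1] using sin_lt (arcsin_pos.2 hx)

lemma fFun_deriv_pos {z : ℝ} (hz : 2 < z) (hz4 : z < 4) :
    0 < 4 * z * arcsin (aFun z / z) - √(16 - z ^ 2) := by
  have hz0 : 0 < z := by linarith
  have hz16 : z ^ 2 < 16 := by nlinarith
  have hq : 0 < √(16 - z ^ 2) := sqrt_pos.2 (by linarith)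
  have hr : √(8 * (z ^ 2 + 2)) < 4 * z := by
    rw [sqrt_lt' (by positivity)]
    nlinarith
  rw [aFun_div_self hz0, sub_pos]
  calc √(16 - z ^ 2)
      < 4 * z * aRatio z := by
        rw [aRatio, mul_div_assoc', lt_div_iff₀ (sqrt_pos.2 (by positivity))]
        nlinarith
    _ < 4 * z * arcsin (aRatio z) :=
        mul_lt_mul_of_pos_left (lt_arcsin_self (aRatio_pos hz16) (aRatio_lt_one hz0.ne').le)
          (by positivity)

lemma strictMonoOn_fFun : StrictMonoOn fFun (Ioo 2 4) := by
  refine strictMonoOn_of_deriv_pos (convex_Ioo 2 4)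
    (fun x hx ↦ (hasDerivAt_fFun hx.1 hx.2).continuousAt.continuousWithinAt) fun x hx ↦ ?_
  rw [interior_Ioo] at hx
  rw [(hasDerivAt_fFun hx.1 hx.2).deriv]
  exact fFun_deriv_pos hx.1 hx.2

lemma fFun_four : fFun 4 = 2 * π := by
  have ha : aFun 4 = 0 := by norm_num [aFun]
  norm_num [fFun, gFun, hFun, ha]
  ring

theorem stmt13 :
    StrictMonoOn fFun (Set.Ioo (2 * Real.sqrt 2) 4) ∧ fFun 4 = 2 * Real.pi := by
  have h2 : (2 : ℝ) ≤ 2 * √2 := le_mul_of_one_le_right zero_le_two (one_le_sqrt.2 one_le_two)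
  exact ⟨strictMonoOn_fFun.mono (Ioo_subset_Ioo_left h2), fFun_four⟩
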